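/- arXiv:2402.06603 — 3 statements merged into one kernel-verified Lean document; each statement's English description precedes it below -/
import Mathlib

section
/- Let F be a linear forest with no isolated vertices, and let F' be obtained from F by deleting one edge yz of F and adding an edge xz, where x is an endpoint of a path of F and z is at distance at least 3 in F from x. Then F' is a linear forest and End(F') = (End(F) ∪ {y}) \ {x}, where End denotes the set of endpoints of paths. -/
open scoped Classical
open SimpleGraph Finset

/-- A linear forest: an acyclic graph of maximum degree at most 2,
i.e. a disjoint union of paths. -/
def IsLinearForest {V : Type*} (F : SimpleGraph V) : Prop :=
  F.IsAcyclic ∧ ∀ v, (F.neighborSet v).ncard ≤ 2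

/-- The endpoints of the paths of a linear forest: the vertices of degree at most 1
(an isolated vertex being the endpoint of a trivial path). -/
noncomputable def pathEnds {V : Type*} [Fintype V] (F : SimpleGraph V) : Finset V :=
  Finset.univ.filter (fun v => F.degree v ≤ 1)

/-!
Deleting the edge `yz` disconnects `y` from `z`, since every edge of a forest is a bridge, while a
shortest `x`–`y` path avoids `z` (which is farther from `x`) and so survives the deletion. Hence
`x` and `z` lie in different components after the deletion and adding `xz` creates no cycle.
The degree changes only at `x` (up by one) and at `y` (down by one), so degrees stay at most 2,
`x` stops being an endpoint and `y` becomes one.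
-/

namespace SimpleGraph

variable {V : Type*}

lemma ncard_neighborSet_eq_degree [Fintype V] (G : SimpleGraph V) (v : V) :
    (G.neighborSet v).ncard = G.degree v := by
  rw [← card_neighborFinset_eq_degree, ← Set.ncard_coe_finset, coe_neighborFinset]

lemma isLinearForest_iff_degree_le_two [Fintype V] {G : SimpleGraph V} :
    IsLinearForest G ↔ G.IsAcyclic ∧ ∀ v, G.degree v ≤ 2 := by
  simp only [IsLinearForest, ncard_neighborSet_eq_degree]

def rotate (G : SimpleGraph V) (x y z : V) : SimpleGraph V :=
  G.deleteEdges {s(y, z)} ⊔ edge x z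

lemma fromEdgeSet_eq_rotate (G : SimpleGraph V) (x y z : V) :
    fromEdgeSet ((G.edgeSet \ {s(y, z)}) ∪ {s(x, z)}) = G.rotate x y z := by
  ext a b
  simp only [rotate, fromEdgeSet_adj, sup_adj, deleteEdges_adj, edge_adj, Set.mem_union,
    Set.mem_sdiff, Set.mem_singleton_iff, mem_edgeSet, Sym2.eq_iff]
  grind [Adj.ne]

lemma rotate_adj {G : SimpleGraph V} {x y z a b : V} :
    (G.rotate x y z).Adj a b ↔ G.Adj a b ∧ ¬(a = y ∧ b = z ∨ a = z ∧ b = y) ∨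
      (a = x ∧ b = z ∨ a = z ∧ b = x) ∧ a ≠ b := by
  simp [rotate, edge_adj]

lemma reachable_deleteEdges_of_dist_lt {G : SimpleGraph V} {x y z : V} (h : G.Reachable x y)
    (hd : G.dist x y < G.dist x z) (w : V) : (G.deleteEdges {s(w, z)}).Reachable x y := by
  obtain ⟨p, hp⟩ := h.exists_walk_length_eq_dist
  have hz : z ∉ p.support := fun hz =>
    (G.dist_le (p.takeUntil z hz)).not_gt ((p.length_takeUntil_le_length hz).trans_lt (hp ▸ hd))
  exact (p.toDeleteEdge _ fun he => hz (p.snd_mem_support_of_mem_edges he)).reachable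

lemma IsAcyclic.rotate {G : SimpleGraph V} {x y z : V} (hG : G.IsAcyclic) (hyz : G.Adj y z)
    (hxy : G.Reachable x y) (hd : G.dist x y < G.dist x z) : (G.rotate x y z).IsAcyclic := by
  refine (hG.anti (G.deleteEdges_le _)).sup_edge_of_not_reachable fun hxz => ?_
  exact isAcyclic_iff_forall_adj_isBridge.mp hG hyz
    ((reachable_deleteEdges_of_dist_lt hxy hd y).symm.trans hxz)

section Degree

variable [Fintype V] {G : SimpleGraph V} {x y z : V}

lemma neighborFinset_rotate_left [DecidableEq V] (hxy : x ≠ y) (hxz : x ≠ z) :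
    (G.rotate x y z).neighborFinset x = insert z (G.neighborFinset x) := by
  ext a
  simp only [mem_neighborFinset, rotate_adj, Finset.mem_insert]
  grind

lemma neighborFinset_rotate_middle [DecidableEq V] (hxy : x ≠ y) (hyz : y ≠ z) :
    (G.rotate x y z).neighborFinset y = (G.neighborFinset y).erase z := by
  ext a
  simp only [mem_neighborFinset, rotate_adj, Finset.mem_erase]
  grind

lemma neighborFinset_rotate_right [DecidableEq V] (hxz : x ≠ z) (hyz : y ≠ z) :
    (G.rotate x y z).neighborFinset z = insert x ((G.neighborFinset z).erase y) := by
  ext a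
  simp only [mem_neighborFinset, rotate_adj, Finset.mem_insert, Finset.mem_erase]
  grind [Adj.ne]

lemma neighborFinset_rotate_of_ne {v : V} (hvx : v ≠ x) (hvy : v ≠ y) (hvz : v ≠ z) :
    (G.rotate x y z).neighborFinset v = G.neighborFinset v := by
  ext a
  simp only [mem_neighborFinset, rotate_adj]
  grind

lemma degree_rotate_left (hxy : x ≠ y) (hxz : x ≠ z) (hnadj : ¬G.Adj x z) :
    (G.rotate x y z).degree x = G.degree x + 1 := by
  classical
  rw [← card_neighborFinset_eq_degree, neighborFinset_rotate_left hxy hxz,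
    card_insert_of_notMem (by simpa using hnadj), card_neighborFinset_eq_degree]

lemma degree_rotate_middle (hxy : x ≠ y) (hyz : G.Adj y z) :
    (G.rotate x y z).degree y = G.degree y - 1 := by
  classical
  rw [← card_neighborFinset_eq_degree, neighborFinset_rotate_middle hxy hyz.ne,
    card_erase_of_mem (by simpa using hyz), card_neighborFinset_eq_degree]

lemma degree_rotate_of_ne {v : V} (hxz : x ≠ z) (hnadj : ¬G.Adj x z) (hyz : G.Adj y z)
    (hvx : v ≠ x) (hvy : v ≠ y) : (G.rotate x y z).degree v = G.degree v := by
  classical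
  rw [← card_neighborFinset_eq_degree, ← card_neighborFinset_eq_degree]
  by_cases hvz : v = z
  · subst hvz
    rw [neighborFinset_rotate_right hxz hyz.ne,
      card_insert_of_notMem (by simpa using fun _ h => hnadj h.symm),
      card_erase_add_one (by simpa using hyz.symm)]
  · rw [neighborFinset_rotate_of_ne hvx hvy hvz]

end Degree

section LinearForest

variable [Fintype V] {G : SimpleGraph V} {x y z : V}

lemma IsLinearForest.rotate (hG : IsLinearForest G) (hx : G.degree x ≤ 1) (hyz : G.Adj y z)
    (hxy : x ≠ y) (hxz : x ≠ z) (hnadj : ¬G.Adj x z) (hreach : G.Reachable x y)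
    (hd : G.dist x y < G.dist x z) : IsLinearForest (G.rotate x y z) := by
  rw [isLinearForest_iff_degree_le_two] at hG ⊢
  refine ⟨hG.1.rotate hyz hreach hd, fun v => ?_⟩
  rcases eq_or_ne v x with rfl | hvx
  · rw [degree_rotate_left hxy hxz hnadj]; omega
  rcases eq_or_ne v y with rfl | hvy
  · rw [degree_rotate_middle hxy hyz]; exact (Nat.sub_le _ _).trans (hG.2 v)
  · rw [degree_rotate_of_ne hxz hnadj hyz hvx hvy]; exact hG.2 v

lemma pathEnds_rotate [DecidableEq V] (hx : 0 < G.degree x) (hy : G.degree y ≤ 2)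
    (hyz : G.Adj y z) (hxy : x ≠ y) (hxz : x ≠ z) (hnadj : ¬G.Adj x z) :
    pathEnds (G.rotate x y z) = (pathEnds G ∪ {y}) \ {x} := by
  ext v
  simp only [pathEnds, mem_filter, mem_univ, true_and, mem_sdiff, mem_union, mem_singleton]
  rcases eq_or_ne v x with rfl | hvx
  · simp only [degree_rotate_left hxy hxz hnadj, not_true, and_false, iff_false]; omega
  rcases eq_or_ne v y with rfl | hvy
  · simp only [degree_rotate_middle hxy hyz, or_true, true_and, hvx, not_false_eq_true,
      iff_true]
    omega
  · simp [degree_rotate_of_ne hxz hnadj hyz hvx hvy, hvx, hvy]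

end LinearForest

end SimpleGraph

theorem stmt8_general {V : Type*} [Fintype V] [DecidableEq V] (F : SimpleGraph V)
    (hF : IsLinearForest F)
    (x y z : V) (hx : F.degree x ≤ 1)
    (hdist : 3 ≤ F.dist x z)
    (hyz : F.Adj y z) (hy : F.dist x y + 1 = F.dist x z)
    (F' : SimpleGraph V)
    (hF' : F' = SimpleGraph.fromEdgeSet ((F.edgeSet \ {s(y, z)}) ∪ {s(x, z)})) :
    IsLinearForest F' ∧ pathEnds F' = (pathEnds F ∪ {y}) \ {x} := by
  obtain ⟨hxy, hreach⟩ := dist_ne_zero_iff_ne_and_reachable.mp (show F.dist x y ≠ 0 by omega)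
  have hxz : x ≠ z := by rintro rfl; simp at hdist
  have hnadj : ¬F.Adj x z := by rw [← dist_eq_one_iff_adj]; omega
  have hx_pos : 0 < F.degree x :=
    (F.degree_pos_iff_exists_adj x).2 ⟨_, hreach.some.adj_snd (Walk.not_nil_of_ne hxy)⟩
  have hy_le : F.degree y ≤ 2 := (isLinearForest_iff_degree_le_two.mp hF).2 y
  rw [hF', fromEdgeSet_eq_rotate]
  exact ⟨hF.rotate hx hyz hxy hxz hnadj hreach (by omega),
    pathEnds_rotate hx_pos hy_le hyz hxy hxz hnadj⟩

/-- Rotation of a linear forest: delete the edge `yz` and add the edge `xz`, where `x`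
is an endpoint of a path of `F`, `z` is at `F`-distance at least 3 from `x` and `y` is
the neighbour of `z` on the path towards `x`.  The result is again a linear forest and
its path endpoints are `(End(F) ∪ {y}) \ {x}`. -/
theorem stmt8 {V : Type*} [Fintype V] [DecidableEq V] (F : SimpleGraph V)
    (hF : IsLinearForest F) (hiso : ∀ v : V, 0 < F.degree v)
    (x y z : V) (hx : F.degree x ≤ 1)
    (hdist : 3 ≤ F.dist x z)
    (hyz : F.Adj y z) (hy : F.dist x y + 1 = F.dist x z)
    (F' : SimpleGraph V)
    (hF' : F' = SimpleGraph.fromEdgeSet ((F.edgeSet \ {s(y, z)}) ∪ {s(x, z)})) :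
    IsLinearForest F' ∧ pathEnds F' = (pathEnds F ∪ {y}) \ {x} :=
  stmt8_general F hF x y z hx hdist hyz hy F' hF'
end

section
/- Let H1 be an (A1, B1)-linking structure and H2 be an (A2, B2)-linking structure, vertex-disjoint, with |A1| = |B1| = |A2| = |B2|, and suppose all linking paths in H1 have length ℓ1 and all in H2 have length ℓ2. Let H be obtained from the disjoint union of H1 and H2 by adding a perfect matching between B1 and A2 identified via a fixed bijection ψ: B1 → A2 (i.e., edges b ψ(b)). Then H is an (A1, B2)-linking structure. -/
open scoped Classical
open SimpleGraph Finset

/-- `H` is an `(A,B)`-linking structure: `A` and `B` are disjoint sets of equal size and,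
for every bijection `φ : A → B`, there are vertex-disjoint paths of equal length covering
all vertices of `H`, each joining some `a ∈ A` to `φ a`. -/
def IsLinkingStructure {V : Type*} (H : SimpleGraph V) (A B : Finset V) : Prop :=
  Disjoint A B ∧ A.card = B.card ∧
  ∀ φ : A → B, Function.Bijective φ →
    ∃ P : ∀ a : A, H.Walk (a : V) ((φ a : V)),
      (∀ a, (P a).IsPath) ∧
      (∃ L, ∀ a, (P a).length = L) ∧
      (∀ a a' : A, a ≠ a' → ∀ v, v ∈ (P a).support → v ∉ (P a').support) ∧
      (∀ v : V, ∃ a, v ∈ (P a).support)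

/-- An `(A,B)`-linking structure in which, for every bijection, all the linking paths
have the fixed length `ℓ`. -/
def IsLinkingStructureLen {V : Type*} (H : SimpleGraph V) (A B : Finset V) (ℓ : ℕ) : Prop :=
  Disjoint A B ∧ A.card = B.card ∧
  ∀ φ : A → B, Function.Bijective φ →
    ∃ P : ∀ a : A, H.Walk (a : V) ((φ a : V)),
      (∀ a, (P a).IsPath) ∧
      (∀ a, (P a).length = ℓ) ∧
      (∀ a a' : A, a ≠ a' → ∀ v, v ∈ (P a).support → v ∉ (P a').support) ∧
      (∀ v : V, ∃ a, v ∈ (P a).support)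

/-!
To realise a bijection `φ : A1 → B2`, link `A1` to `B1` inside `H1` along an arbitrary
bijection `φ₁`, cross the matching edge `b ψ(b)`, and link `A2` to `B2` inside `H2` along
the bijection `ψ (φ₁ a) ↦ φ a`. The concatenated paths all have length `ℓ1 + 1 + ℓ2`, are
vertex-disjoint, and cover `V1 ⊕ V2` because the two path systems cover `V1` and `V2`.
-/

namespace SimpleGraph

variable {V : Type*} {G : SimpleGraph V}

structure IsPathPartition {ι : Type*} {s t : ι → V} (P : ∀ i, G.Walk (s i) (t i)) : Prop where
  isPath : ∀ i, (P i).IsPath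
  disjoint : Pairwise fun i j => (P i).support.Disjoint (P j).support
  cover : ∀ v, ∃ i, v ∈ (P i).support

namespace IsPathPartition

variable {ι κ : Type*} {s t : ι → V} {P : ∀ i, G.Walk (s i) (t i)}

theorem comp_equiv (hP : IsPathPartition P) (e : κ ≃ ι) : IsPathPartition fun k => P (e k) where
  isPath k := hP.isPath (e k)
  disjoint _ _ hne := hP.disjoint (e.injective.ne hne)
  cover v := by
    obtain ⟨i, hi⟩ := hP.cover v
    exact ⟨e.symm i, by rwa [e.apply_symm_apply]⟩

theorem copy (hP : IsPathPartition P) {s' t' : ι → V} (hs : ∀ i, s i = s' i)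
    (ht : ∀ i, t i = t' i) : IsPathPartition fun i => (P i).copy (hs i) (ht i) where
  isPath i := by simpa using hP.isPath i
  disjoint _ _ hne := by simpa using hP.disjoint hne
  cover v := by simpa using hP.cover v

end IsPathPartition

section Sum

variable {V₁ V₂ : Type*} {H₁ : SimpleGraph V₁} {H₂ : SimpleGraph V₂} {H : SimpleGraph (V₁ ⊕ V₂)}
  (hl : ∀ {u v}, H₁.Adj u v → H.Adj (.inl u) (.inl v))
  (hr : ∀ {u v}, H₂.Adj u v → H.Adj (.inr u) (.inr v))

def Walk.sumConcat {a b : V₁} {c d : V₂} (p : H₁.Walk a b) (hbc : H.Adj (.inl b) (.inr c))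
    (q : H₂.Walk c d) : H.Walk (.inl a) (.inr d) :=
  (p.map ⟨Sum.inl, hl⟩).append (.cons hbc (q.map ⟨Sum.inr, hr⟩))

variable {a b : V₁} {c d : V₂}

theorem Walk.support_sumConcat (p : H₁.Walk a b) (hbc : H.Adj (.inl b) (.inr c))
    (q : H₂.Walk c d) :
    (p.sumConcat hl hr hbc q).support = p.support.map .inl ++ q.support.map .inr := by
  simp [Walk.sumConcat, Walk.support_append]

theorem Walk.length_sumConcat (p : H₁.Walk a b) (hbc : H.Adj (.inl b) (.inr c))
    (q : H₂.Walk c d) : (p.sumConcat hl hr hbc q).length = p.length + q.length + 1 := by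
  simp only [Walk.sumConcat, Walk.length_append, Walk.length_cons, Walk.length_map]
  omega

theorem Walk.IsPath.sumConcat {p : H₁.Walk a b} {q : H₂.Walk c d} (hp : p.IsPath)
    (hbc : H.Adj (.inl b) (.inr c)) (hq : q.IsPath) : (p.sumConcat hl hr hbc q).IsPath := by
  rw [Walk.isPath_def, Walk.support_sumConcat]
  exact hp.support_nodup.map Sum.inl_injective |>.append
    (hq.support_nodup.map Sum.inr_injective) (by simp [List.Disjoint])

theorem IsPathPartition.sumConcat {ι : Type*} {s₁ t₁ : ι → V₁} {s₂ t₂ : ι → V₂}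
    {P₁ : ∀ i, H₁.Walk (s₁ i) (t₁ i)} {P₂ : ∀ i, H₂.Walk (s₂ i) (t₂ i)}
    (h₁ : IsPathPartition P₁) (hm : ∀ i, H.Adj (.inl (t₁ i)) (.inr (s₂ i)))
    (h₂ : IsPathPartition P₂) :
    IsPathPartition fun i => (P₁ i).sumConcat hl hr (hm i) (P₂ i) where
  isPath i := (h₁.isPath i).sumConcat hl hr (hm i) (h₂.isPath i)
  disjoint i j hne := by
    simp only [Walk.support_sumConcat, List.disjoint_append_left, List.disjoint_append_right]
    exact ⟨⟨List.disjoint_map Sum.inl_injective (h₁.disjoint hne), by simp [List.Disjoint]⟩,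
      by simp [List.Disjoint], List.disjoint_map Sum.inr_injective (h₂.disjoint hne)⟩
  cover
    | .inl v => by
      obtain ⟨i, hi⟩ := h₁.cover v
      exact ⟨i, by simp [Walk.support_sumConcat, hi]⟩
    | .inr v => by
      obtain ⟨i, hi⟩ := h₂.cover v
      exact ⟨i, by simp [Walk.support_sumConcat, hi]⟩

end Sum

end SimpleGraph

section LinkingStructure

variable {V : Type*} {G : SimpleGraph V} {A B : Finset V}

theorem IsLinkingStructureLen.exists_isPathPartition {ℓ : ℕ} (h : IsLinkingStructureLen G A B ℓ)
    {ι : Type*} (e : ι ≃ A) (f : ι ≃ B) :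
    ∃ P : ∀ i, G.Walk (e i) (f i), IsPathPartition P ∧ ∀ i, (P i).length = ℓ := by
  obtain ⟨P, hpath, hlen, hdisj, hcov⟩ := h.2.2 (e.symm.trans f) (Equiv.bijective _)
  have hP : IsPathPartition P := ⟨hpath, fun a a' hne v => hdisj a a' hne v, hcov⟩
  exact ⟨_, (hP.comp_equiv e).copy (fun _ => rfl) (fun i => by simp),
    fun i => by rw [Walk.length_copy, hlen]⟩

theorem IsLinkingStructure.of_isPathPartition (hd : Disjoint A B) (hc : A.card = B.card)
    (h : ∀ φ : A ≃ B, ∃ P : ∀ a : A, G.Walk a (φ a),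
      IsPathPartition P ∧ ∃ L, ∀ a, (P a).length = L) :
    IsLinkingStructure G A B := by
  refine ⟨hd, hc, fun φ hφ => ?_⟩
  obtain ⟨P, hP, hL⟩ := h (.ofBijective φ hφ)
  exact ⟨P, hP.isPath, hL, fun a a' hne => hP.disjoint hne, hP.cover⟩

end LinkingStructure

theorem stmt14_general {V1 V2 : Type*}
    (H1 : SimpleGraph V1) (H2 : SimpleGraph V2)
    (A1 B1 : Finset V1) (A2 B2 : Finset V2) (ℓ1 ℓ2 : ℕ)
    (h1 : IsLinkingStructureLen H1 A1 B1 ℓ1) (h2 : IsLinkingStructureLen H2 A2 B2 ℓ2)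
    (ψ : V1 → V2) (hψmap : ∀ b ∈ B1, ψ b ∈ A2) (hψinj : Set.InjOn ψ ↑B1)
    (hψsurj : ∀ a ∈ A2, ∃ b ∈ B1, ψ b = a) (hcard : B1.card = A2.card)
    (H : SimpleGraph (V1 ⊕ V2))
    (hHl : ∀ u v : V1, H.Adj (Sum.inl u) (Sum.inl v) ↔ H1.Adj u v)
    (hHr : ∀ u v : V2, H.Adj (Sum.inr u) (Sum.inr v) ↔ H2.Adj u v)
    (hHm : ∀ (u : V1) (v : V2), H.Adj (Sum.inl u) (Sum.inr v) ↔ (u ∈ B1 ∧ v = ψ u)) :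
    IsLinkingStructure H (A1.map ⟨Sum.inl, Sum.inl_injective⟩)
      (B2.map ⟨Sum.inr, Sum.inr_injective⟩) := by
  refine .of_isPathPartition (disjoint_map_inl_map_inr _ _)
    (by simp only [card_map, h1.2.1, hcard, h2.2.1]) fun φ => ?_
  let eA := A1.equivMap (⟨Sum.inl, Sum.inl_injective⟩ : V1 ↪ V1 ⊕ V2)
  let eB := B2.equivMap (⟨Sum.inr, Sum.inr_injective⟩ : V2 ↪ V1 ⊕ V2)
  let φ₁ : A1 ≃ B1 := equivOfCardEq h1.2.1
  let ψ' : B1 ≃ A2 := Set.BijOn.equiv ψ ⟨hψmap, hψinj, hψsurj⟩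
  obtain ⟨P₁, hP₁, hlen₁⟩ := h1.exists_isPathPartition (.refl _) φ₁
  obtain ⟨P₂, hP₂, hlen₂⟩ :=
    h2.exists_isPathPartition (φ₁.trans ψ') (eA.trans (φ.trans eB.symm))
  have hm : ∀ i, H.Adj (.inl (φ₁ i)) (.inr ((φ₁.trans ψ') i)) :=
    fun i => (hHm _ _).2 ⟨(φ₁ i).2, rfl⟩
  have hW := (hP₁.sumConcat (hHl _ _).2 (hHr _ _).2 hm hP₂).comp_equiv eA.symm
  refine ⟨_, hW.copy (s' := fun a => a) (t' := fun a => φ a) (fun a => ?_) (fun a => ?_),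
    ℓ1 + ℓ2 + 1, fun a => by simp only [Walk.length_copy, Walk.length_sumConcat, hlen₁, hlen₂]⟩
  · exact congrArg Subtype.val (eA.apply_symm_apply a)
  · rw [Equiv.trans_apply, Equiv.trans_apply, eA.apply_symm_apply]
    exact congrArg Subtype.val (eB.apply_symm_apply (φ a))

/-- Composing two vertex-disjoint linking structures (with fixed path lengths `ℓ1`, `ℓ2`)
by a perfect matching from `B1` to `A2` given by a bijection `ψ` yields an
`(A1,B2)`-linking structure. -/
theorem stmt14 {V1 V2 : Type*} [Fintype V1] [Fintype V2] [DecidableEq V1] [DecidableEq V2]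
    (H1 : SimpleGraph V1) (H2 : SimpleGraph V2)
    (A1 B1 : Finset V1) (A2 B2 : Finset V2) (ℓ1 ℓ2 : ℕ)
    (h1 : IsLinkingStructureLen H1 A1 B1 ℓ1) (h2 : IsLinkingStructureLen H2 A2 B2 ℓ2)
    (ψ : V1 → V2) (hψmap : ∀ b ∈ B1, ψ b ∈ A2) (hψinj : Set.InjOn ψ ↑B1)
    (hψsurj : ∀ a ∈ A2, ∃ b ∈ B1, ψ b = a) (hcard : B1.card = A2.card)
    (H : SimpleGraph (V1 ⊕ V2))
    (hHl : ∀ u v : V1, H.Adj (Sum.inl u) (Sum.inl v) ↔ H1.Adj u v)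
    (hHr : ∀ u v : V2, H.Adj (Sum.inr u) (Sum.inr v) ↔ H2.Adj u v)
    (hHm : ∀ (u : V1) (v : V2), H.Adj (Sum.inl u) (Sum.inr v) ↔ (u ∈ B1 ∧ v = ψ u)) :
    IsLinkingStructure H (A1.map ⟨Sum.inl, Sum.inl_injective⟩)
      (B2.map ⟨Sum.inr, Sum.inr_injective⟩) :=
  stmt14_general H1 H2 A1 B1 A2 B2 ℓ1 ℓ2 h1 h2 ψ hψmap hψinj hψsurj hcard H hHl hHr hHm
end

section
/- Let F be a linear forest and F' a k-rotation of F starting at v. If S is a set of new endpoints with E^k_U(v,F) ⊆ S ⊆ E^{k+1}_U(v,F), then the set of pivot vertices used in the 1-rotations producing endpoints in S has size at most 2|S|. -/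
open scoped Classical
open SimpleGraph Finset

/-- The interior of a set `U` with respect to `F`: vertices of `U` all of whose
`F`-neighbours lie in `U`. -/
def interiorSet {V : Type*} (F : SimpleGraph V) (U : Set V) : Set V :=
  {u ∈ U | ∀ w, F.Adj u w → w ∈ U}

/-- `x` is an endpoint of a path of `F` (degree at most 1). -/
def IsEndpoint {V : Type*} (F : SimpleGraph V) (x : V) : Prop :=
  (F.neighborSet x).Subsingleton

/-- A 1-rotation of the linear forest `F` in `G` with old endpoint `x`, pivot `z` and new
endpoint `y`: delete the broken edge `yz` of `F` (or take `y = z` if `z` is isolated in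
`F`) and add the edge `xz ∈ E(G)`. -/
def IsOneRotation {V : Type*} (G F F' : SimpleGraph V) (x z y : V) : Prop :=
  IsEndpoint F x ∧ G.Adj x z ∧
  (F.Adj z y ∨ (y = z ∧ ∀ w, ¬ F.Adj z w)) ∧
  F' = SimpleGraph.fromEdgeSet ((F.edgeSet \ {s(y, z)}) ∪ {s(x, z)})

/-- A `(U,k)`-rotation of `F` in `G` starting at `v`: a sequence of `k` consecutive
1-rotations, each starting at the previous new endpoint, with all pivots in
`int_F(U)` and each pivot at `F`-distance at least 3 from the start vertex and from all
previous pivots (so all broken edges belong to `F`). -/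
structure RotSeq {V : Type*} (G F : SimpleGraph V) (U : Set V) (v : V) (k : ℕ) where
  forest : ℕ → SimpleGraph V
  endpt : ℕ → V
  pivot : ℕ → V
  forest_zero : forest 0 = F
  endpt_zero : endpt 0 = v
  step : ∀ i < k, IsOneRotation G (forest i) (forest (i + 1)) (endpt i) (pivot (i + 1))
    (endpt (i + 1))
  pivot_int : ∀ i, 1 ≤ i → i ≤ k → pivot i ∈ interiorSet F U
  pivot_dist_start : ∀ i, 1 ≤ i → i ≤ k → 3 ≤ F.dist v (pivot i)
  pivot_dist_pivot : ∀ i j, 1 ≤ j → j < i → i ≤ k → 3 ≤ F.dist (pivot j) (pivot i)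

/-- `E^k_U(v,F)`: the set of new endpoints obtainable from `v` by `(U,i)`-rotations
with `i ≤ k`. -/
def rotEndpoints {V : Type*} (G F : SimpleGraph V) (U : Set V) (v : V) (k : ℕ) : Set V :=
  {y | ∃ i ≤ k, ∃ R : RotSeq G F U v i, R.endpt i = y}

/-! Every rotation breaks an edge of the original forest `F` at its pivot, because a
pivot lies at `F`-distance at least 3 from the start vertex and from all earlier pivots, while
the earlier rotations only change adjacencies within distance 1 of those. So every pivot is an
`F`-neighbour of its new endpoint, or that endpoint itself when it is isolated in `F`; each
endpoint in `S` thus accounts for at most two pivots, as `F` has maximum degree 2. Endpoints of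
rotations of length at most `k` lie in `E^k_U(v,F) ⊆ S` by truncation. -/

section Rotation

variable {V : Type*}

theorem IsOneRotation.adj_iff_of_ne {G F F' : SimpleGraph V} {x z y w : V}
    (h : IsOneRotation G F F' x z y) (hx : w ≠ x) (hz : w ≠ z) (hy : w ≠ y) (u : V) :
    F'.Adj w u ↔ F.Adj w u := by
  obtain ⟨-, -, -, rfl⟩ := h
  simp only [fromEdgeSet_adj, Set.mem_union, Set.mem_sdiff, mem_edgeSet, Set.mem_singleton_iff,
    Sym2.eq_iff]
  constructor
  · rintro ⟨⟨hadj, -⟩ | ⟨rfl, -⟩ | ⟨rfl, -⟩, -⟩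
    exacts [hadj, absurd rfl hx, absurd rfl hz]
  · intro hadj
    refine ⟨Or.inl ⟨hadj, ?_⟩, hadj.ne⟩
    rintro (⟨rfl, -⟩ | ⟨rfl, -⟩)
    exacts [hy rfl, hz rfl]

theorem IsOneRotation.broken_edge {G F F₁ F₂ : SimpleGraph V} {x z y : V}
    (h : IsOneRotation G F₁ F₂ x z y) (hz : ∀ u, F₁.Adj z u ↔ F.Adj z u) :
    F.Adj z y ∨ (y = z ∧ ∀ w, ¬ F.Adj z w) := by
  obtain ⟨-, -, hy | ⟨rfl, hiso⟩, -⟩ := h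
  · exact Or.inl ((hz y).mp hy)
  · exact Or.inr ⟨rfl, fun w hw => hiso w ((hz w).mpr hw)⟩

theorem dist_le_one_of_adj_or_isolated {F : SimpleGraph V} {z y : V}
    (h : F.Adj z y ∨ (y = z ∧ ∀ w, ¬ F.Adj z w)) : F.dist z y ≤ 1 := by
  rcases h with hadj | ⟨rfl, -⟩
  · exact (dist_eq_one_iff_adj.mpr hadj).le
  · simp

end Rotation

namespace RotSeq

variable {V : Type*} {G F : SimpleGraph V} {U : Set V} {v : V} {m : ℕ}

def trunc (R : RotSeq G F U v m) (j : ℕ) (h : j ≤ m) : RotSeq G F U v j where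
  forest := R.forest
  endpt := R.endpt
  pivot := R.pivot
  forest_zero := R.forest_zero
  endpt_zero := R.endpt_zero
  step i hi := R.step i (hi.trans_le h)
  pivot_int i h1 h2 := R.pivot_int i h1 (h2.trans h)
  pivot_dist_start i h1 h2 := R.pivot_dist_start i h1 (h2.trans h)
  pivot_dist_pivot i j' h1 h2 h3 := R.pivot_dist_pivot i j' h1 h2 (h3.trans h)

def Remote (R : RotSeq G F U v m) (i : ℕ) (w : V) : Prop :=
  2 ≤ F.dist v w ∧ ∀ j, 1 ≤ j → j ≤ i → 2 ≤ F.dist (R.pivot j) w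

theorem remote_pivot (R : RotSeq G F U v m) {i : ℕ} (hi : i < m) :
    R.Remote i (R.pivot (i + 1)) :=
  ⟨(R.pivot_dist_start (i + 1) (by omega) hi).trans' (by norm_num),
    fun j h1 h2 => (R.pivot_dist_pivot (i + 1) j h1 (by omega) hi).trans' (by norm_num)⟩

theorem forest_adj_iff_of_remote (R : RotSeq G F U v m) :
    ∀ i ≤ m, ∀ w, R.Remote i w → ∀ u, (R.forest i).Adj w u ↔ F.Adj w u := by
  intro i
  induction i using Nat.strong_induction_on with
  | _ i IH =>
  intro hi w ⟨hv, hp⟩ u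
  have close : ∀ j < i, F.dist (R.pivot (j + 1)) (R.endpt (j + 1)) ≤ 1 := fun j hj =>
    dist_le_one_of_adj_or_isolated <| (R.step j (by omega)).broken_edge <|
      IH j hj (by omega) _ (R.remote_pivot (by omega))
  have ne_of_close {a b : V} (hab : F.dist a b ≤ 1) (haw : 2 ≤ F.dist a w) : w ≠ b := by
    rintro rfl; omega
  rcases i with _ | i
  · rw [R.forest_zero]
  have hx : w ≠ R.endpt i := by
    rcases i with _ | i
    · rw [R.endpt_zero]; exact ne_of_close (by simp) hv
    · exact ne_of_close (close i (by omega)) (hp (i + 1) (by omega) (by omega))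
  have hz : w ≠ R.pivot (i + 1) := ne_of_close (by simp) (hp (i + 1) (by omega) le_rfl)
  have hy : w ≠ R.endpt (i + 1) := ne_of_close (close i (by omega)) (hp (i + 1) (by omega) le_rfl)
  rw [(R.step i (by omega)).adj_iff_of_ne hx hz hy u]
  exact IH i (by omega) (by omega) w ⟨hv, fun j h1 h2 => hp j h1 (by omega)⟩ u

theorem pivot_adj_endpt (R : RotSeq G F U v m) {i : ℕ} (hi : i < m) :
    F.Adj (R.pivot (i + 1)) (R.endpt (i + 1)) ∨
      (R.endpt (i + 1) = R.pivot (i + 1) ∧ ∀ w, ¬ F.Adj (R.pivot (i + 1)) w) :=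
  (R.step i hi).broken_edge (R.forest_adj_iff_of_remote i hi.le _ (R.remote_pivot hi))

end RotSeq

theorem IsLinearForest.ncard_adj_or_isolated_le_two {V : Type*} {F : SimpleGraph V}
    (hF : IsLinearForest F) (y : V) :
    {p | F.Adj p y ∨ (y = p ∧ ∀ w, ¬ F.Adj p w)}.ncard ≤ 2 := by
  by_cases hiso : ∀ w, ¬ F.Adj y w
  · have : {p | F.Adj p y ∨ (y = p ∧ ∀ w, ¬ F.Adj p w)} = {y} := by
      ext p
      simp only [Set.mem_ofPred_eq, Set.mem_singleton_iff]
      constructor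
      · rintro (hadj | ⟨rfl, -⟩)
        exacts [absurd hadj.symm (hiso p), rfl]
      · rintro rfl
        exact Or.inr ⟨rfl, hiso⟩
    simp [this]
  · have : {p | F.Adj p y ∨ (y = p ∧ ∀ w, ¬ F.Adj p w)} = F.neighborSet y := by
      ext p
      simp only [Set.mem_ofPred_eq, mem_neighborSet]
      constructor
      · rintro (hadj | ⟨rfl, hiso'⟩)
        exacts [hadj.symm, absurd hiso' hiso]
      · exact fun hadj => Or.inl hadj.symm
    exact this ▸ hF.2 y

theorem stmt18_general {V : Type*} [Fintype V] (G F : SimpleGraph V)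
    (hF : IsLinearForest F) (U : Set V) (v : V) (k : ℕ)
    (S : Finset V)
    (hS1 : rotEndpoints G F U v k ⊆ ↑S) :
    Set.ncard {p : V | ∃ i ≤ k + 1, ∃ R : RotSeq G F U v i,
        R.endpt i ∈ S ∧ ∃ j, 1 ≤ j ∧ j ≤ i ∧ R.pivot j = p}
      ≤ 2 * S.card := by
  set C : V → Set V := fun y => {p | F.Adj p y ∨ (y = p ∧ ∀ w, ¬ F.Adj p w)}
  have hsub : {p : V | ∃ i ≤ k + 1, ∃ R : RotSeq G F U v i,
      R.endpt i ∈ S ∧ ∃ j, 1 ≤ j ∧ j ≤ i ∧ R.pivot j = p} ⊆ ⋃ y ∈ S, C y := by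
    rintro p ⟨i, hik, R, hRS, j, hj1, hji, rfl⟩
    obtain ⟨j, rfl⟩ : ∃ j', j = j' + 1 := ⟨j - 1, by omega⟩
    have hjS : R.endpt (j + 1) ∈ S := by
      rcases hji.lt_or_eq with hlt | rfl
      · exact hS1 ⟨j + 1, by omega, R.trunc (j + 1) hji, rfl⟩
      · exact hRS
    exact Set.mem_biUnion hjS (R.pivot_adj_endpt (by omega))
  calc _ ≤ (⋃ y ∈ S, C y).ncard := Set.ncard_le_ncard hsub (Set.toFinite _)
    _ ≤ ∑ y ∈ S, (C y).ncard := S.set_ncard_biUnion_le C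
    _ ≤ ∑ _y ∈ S, 2 := sum_le_sum fun y _ => hF.ncard_adj_or_isolated_le_two y
    _ = 2 * S.card := by rw [sum_const, smul_eq_mul, mul_comm]

/-- If `E^k_U(v,F) ⊆ S ⊆ E^{k+1}_U(v,F)`, then the set of pivots used in the 1-rotations
producing new endpoints in `S` has size at most `2|S|`. -/
theorem stmt18 {V : Type*} [Fintype V] [DecidableEq V] (G F : SimpleGraph V)
    (hF : IsLinearForest F) (hFG : F ≤ G) (U : Set V) (v : V) (k : ℕ)
    (R0 : RotSeq G F U v k) (S : Finset V)
    (hS1 : rotEndpoints G F U v k ⊆ ↑S) (hS2 : ↑S ⊆ rotEndpoints G F U v (k + 1)) :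
    Set.ncard {p : V | ∃ i ≤ k + 1, ∃ R : RotSeq G F U v i,
        R.endpt i ∈ S ∧ ∃ j, 1 ≤ j ∧ j ≤ i ∧ R.pivot j = p}
      ≤ 2 * S.card :=
  stmt18_general G F hF U v k S hS1
end
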